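/- arXiv:2306.03865 — 6 statements merged into one kernel-verified Lean document; each statement's English description precedes it below -/
import Mathlib

section
/- Let n ≥ 2 and let g₀, g₁, v ∈ ℝⁿ with g₁ ≠ 0. Let P : ℝⁿ → ℝⁿ denote the orthogonal projection onto the orthogonal complement of span{g₁}, and assume P g₀ ≠ 0. Set τ₁⋆ := ⟨P g₀, v⟩ / ‖P g₀‖². Then there exist τ₁ ∈ ℝ and τ₂ ≥ 0 such that v = (g₀ + g₁)τ₁ + 2 g₁ τ₂ if and only if P v = τ₁⋆ · P g₀ and ⟨g₁, v⟩ − ⟨g₁, g₀ + g₁⟩ · τ₁⋆ ≥ 0; moreover, when a solution exists, necessarily τ₁ = τ₁⋆. -/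
/-! Let `P` be the orthogonal projection onto `(ℝ ∙ g₁)ᗮ`. As `P g₁ = 0`, applying `P` to
`v = τ₁ • (g₀ + g₁) + s • g₁` gives `P v = τ₁ • P g₀`, and pairing with `P g₀ ≠ 0` forces
`τ₁ = τ₁⋆`. Conversely, if `P v = τ₁⋆ • P g₀`, then `v - τ₁⋆ • (g₀ + g₁)` lies in `ker P = ℝ ∙ g₁`,
and its coefficient along `g₁` has the sign of its inner product with `g₁`, which is the quantity
in the second condition. -/

open scoped RealInnerProductSpace

section

variable {E : Type*} [NormedAddCommGroup E] [InnerProductSpace ℝ E]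

theorem starProjection_orthogonal_span_singleton_apply (g w : E) :
    (ℝ ∙ g)ᗮ.starProjection w = w - (⟪g, w⟫ / ‖g‖ ^ 2) • g := by
  rw [Submodule.starProjection_orthogonal_val, Submodule.starProjection_singleton]
  rfl

theorem starProjection_orthogonal_span_singleton_self (g : E) :
    (ℝ ∙ g)ᗮ.starProjection g = 0 :=
  (Submodule.starProjection_apply_eq_zero_iff _).mpr <|
    Submodule.le_orthogonal_orthogonal _ (Submodule.mem_span_singleton_self g)

theorem eq_inner_div_smul_of_starProjection_orthogonal_eq_zero {g w : E}
    (h : (ℝ ∙ g)ᗮ.starProjection w = 0) : w = (⟪g, w⟫ / ‖g‖ ^ 2) • g := by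
  rwa [starProjection_orthogonal_span_singleton_apply, sub_eq_zero] at h

theorem starProjection_orthogonal_span_singleton_smul_add_smul (g x : E) (a b : ℝ) :
    (ℝ ∙ g)ᗮ.starProjection (a • (x + g) + b • g) = a • (ℝ ∙ g)ᗮ.starProjection x := by
  simp only [map_add, map_smul, starProjection_orthogonal_span_singleton_self, smul_zero,
    add_zero]

theorem inner_starProjection_eq_mul_norm_sq (K : Submodule ℝ E) [K.HasOrthogonalProjection]
    {u v : E} {t : ℝ} (h : K.starProjection v = t • K.starProjection u) :
    ⟪K.starProjection u, v⟫ = t * ‖K.starProjection u‖ ^ 2 := by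
  have hnorm : ⟪K.starProjection u, u⟫ = ‖K.starProjection u‖ ^ 2 :=
    K.re_inner_starProjection_eq_normSq u
  calc ⟪K.starProjection u, v⟫ = ⟪u, K.starProjection v⟫ :=
        K.inner_starProjection_left_eq_right u v
    _ = t * ⟪K.starProjection u, u⟫ := by rw [h, inner_smul_right, real_inner_comm]
    _ = t * ‖K.starProjection u‖ ^ 2 := by rw [hnorm]

theorem eq_inner_div_of_eq_smul_add_smul {g₀ g₁ v : E} {τ₁ s : ℝ}
    (hP : (ℝ ∙ g₁)ᗮ.starProjection g₀ ≠ 0) (hv : v = τ₁ • (g₀ + g₁) + s • g₁) :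
    τ₁ = ⟪(ℝ ∙ g₁)ᗮ.starProjection g₀, v⟫ / ‖(ℝ ∙ g₁)ᗮ.starProjection g₀‖ ^ 2 := by
  have hPv := hv ▸ starProjection_orthogonal_span_singleton_smul_add_smul g₁ g₀ τ₁ s
  rw [inner_starProjection_eq_mul_norm_sq _ hPv,
    mul_div_cancel_right₀ _ (pow_ne_zero 2 (norm_ne_zero_iff.mpr hP))]

theorem exists_eq_smul_add_smul_of_starProjection_eq_smul {g₀ g₁ v : E} {t : ℝ}
    (hPv : (ℝ ∙ g₁)ᗮ.starProjection v = t • (ℝ ∙ g₁)ᗮ.starProjection g₀)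
    (hc : 0 ≤ ⟪g₁, v⟫ - ⟪g₁, g₀ + g₁⟫ * t) :
    ∃ τ₂ : ℝ, 0 ≤ τ₂ ∧ v = t • (g₀ + g₁) + (2 * τ₂) • g₁ := by
  set w := v - t • (g₀ + g₁) with hw
  have hPw : (ℝ ∙ g₁)ᗮ.starProjection w = 0 := by
    simp only [hw, map_sub, map_smul, map_add, starProjection_orthogonal_span_singleton_self,
      add_zero, hPv, sub_self]
  have hg₁w : ⟪g₁, w⟫ = ⟪g₁, v⟫ - ⟪g₁, g₀ + g₁⟫ * t := by
    rw [hw, inner_sub_right, inner_smul_right, mul_comm]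
  refine ⟨(⟪g₁, w⟫ / ‖g₁‖ ^ 2) / 2, by rw [hg₁w]; positivity, ?_⟩
  rw [mul_div_cancel₀ _ two_ne_zero, ← eq_inner_div_smul_of_starProjection_orthogonal_eq_zero hPw,
    hw, add_sub_cancel]

theorem inner_smul_add_smul_sub_inner_mul (g₀ g₁ : E) (τ₁ s : ℝ) :
    ⟪g₁, τ₁ • (g₀ + g₁) + s • g₁⟫ - ⟪g₁, g₀ + g₁⟫ * τ₁ = s * ‖g₁‖ ^ 2 := by
  rw [inner_add_right, inner_smul_right, inner_smul_right, real_inner_self_eq_norm_sq]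
  ring

end

theorem stmt_2_general (n : ℕ)
    (g₀ g₁ v : EuclideanSpace ℝ (Fin n))
    (K : Submodule ℝ (EuclideanSpace ℝ (Fin n))) (hK : K = (ℝ ∙ g₁)ᗮ)
    (Pg₀ Pv : EuclideanSpace ℝ (Fin n))
    (hPg₀ : Pg₀ = (K.orthogonalProjectionOnto g₀ : EuclideanSpace ℝ (Fin n)))
    (hPv : Pv = (K.orthogonalProjectionOnto v : EuclideanSpace ℝ (Fin n)))
    (hP : Pg₀ ≠ 0)
    (τ₁s : ℝ) (hτ : τ₁s = ⟪Pg₀, v⟫ / ‖Pg₀‖ ^ 2) :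
    ((∃ τ₁ τ₂ : ℝ, 0 ≤ τ₂ ∧ v = τ₁ • (g₀ + g₁) + (2 * τ₂) • g₁) ↔
      (Pv = τ₁s • Pg₀ ∧ 0 ≤ ⟪g₁, v⟫ - ⟪g₁, g₀ + g₁⟫ * τ₁s)) ∧
      ∀ τ₁ τ₂ : ℝ, 0 ≤ τ₂ → v = τ₁ • (g₀ + g₁) + (2 * τ₂) • g₁ → τ₁ = τ₁s := by
  subst hK
  rw [← Submodule.starProjection_apply] at hPg₀ hPv
  subst hPg₀ hPv hτ
  have huniq : ∀ τ₁ τ₂ : ℝ, 0 ≤ τ₂ → v = τ₁ • (g₀ + g₁) + (2 * τ₂) • g₁ →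
      τ₁ = ⟪(ℝ ∙ g₁)ᗮ.starProjection g₀, v⟫ / ‖(ℝ ∙ g₁)ᗮ.starProjection g₀‖ ^ 2 :=
    fun _ _ _ hsol ↦ eq_inner_div_of_eq_smul_add_smul hP hsol
  refine ⟨⟨?_, ?_⟩, huniq⟩
  · rintro ⟨τ₁, τ₂, hτ₂, hsol⟩
    rw [← huniq τ₁ τ₂ hτ₂ hsol, hsol, inner_smul_add_smul_sub_inner_mul]
    exact ⟨starProjection_orthogonal_span_singleton_smul_add_smul g₁ g₀ τ₁ _, by positivity⟩
  · rintro ⟨hPv, hc⟩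
    obtain ⟨τ₂, hτ₂, hsol⟩ := exists_eq_smul_add_smul_of_starProjection_eq_smul hPv hc
    exact ⟨_, τ₂, hτ₂, hsol⟩

/-- Solvability characterization of `v = (g₀+g₁)τ₁ + 2g₁τ₂` with `τ₂ ≥ 0`,
where `P` is the orthogonal projection onto `(span{g₁})ᗮ` and
`τ₁⋆ = ⟨Pg₀, v⟩/‖Pg₀‖²`; moreover any solution has `τ₁ = τ₁⋆`. -/
theorem stmt_2 (n : ℕ) (hn : 2 ≤ n)
    (g₀ g₁ v : EuclideanSpace ℝ (Fin n)) (hg₁ : g₁ ≠ 0)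
    (K : Submodule ℝ (EuclideanSpace ℝ (Fin n))) (hK : K = (ℝ ∙ g₁)ᗮ)
    (Pg₀ Pv : EuclideanSpace ℝ (Fin n))
    (hPg₀ : Pg₀ = (K.orthogonalProjectionOnto g₀ : EuclideanSpace ℝ (Fin n)))
    (hPv : Pv = (K.orthogonalProjectionOnto v : EuclideanSpace ℝ (Fin n)))
    (hP : Pg₀ ≠ 0)
    (τ₁s : ℝ) (hτ : τ₁s = ⟪Pg₀, v⟫ / ‖Pg₀‖ ^ 2) :
    ((∃ τ₁ τ₂ : ℝ, 0 ≤ τ₂ ∧ v = τ₁ • (g₀ + g₁) + (2 * τ₂) • g₁) ↔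
      (Pv = τ₁s • Pg₀ ∧ 0 ≤ ⟪g₁, v⟫ - ⟪g₁, g₀ + g₁⟫ * τ₁s)) ∧
      ∀ τ₁ τ₂ : ℝ, 0 ≤ τ₂ → v = τ₁ • (g₀ + g₁) + (2 * τ₂) • g₁ → τ₁ = τ₁s :=
  stmt_2_general n g₀ g₁ v K hK Pg₀ Pv hPg₀ hPv hP τ₁s hτ
end

section
/- Let n ≥ 1, q⋆ ∈ ℝⁿ, γ ≥ 0 and α₂ > n γ, and define U_d(q) = −γ cos(qΣ − qΣ⋆) + (α₂/2)‖q − q⋆‖² with qΣ := Σᵢ qᵢ, qΣ⋆ := Σᵢ q⋆ᵢ. Then U_d is twice differentiable and at every q ∈ ℝⁿ its Hessian equals γ cos(qΣ − qΣ⋆)·𝟙_{n×n} + α₂·Iₙ, which is a positive definite matrix for every q ∈ ℝⁿ. Consequently U_d is strictly convex on ℝⁿ. -/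
/-!
Write `u` for the all-ones vector, so that `⟪u, q⟫ = ∑ i, q i` and `‖u‖² = n`; then
`U_d q = -γ cos ⟪u, q - q⋆⟫ + (α₂/2)‖q - q⋆‖²`. Its Hessian is `v ↦ γ cos(⋯) ⟪u, v⟫ u + α₂ v`,
whose quadratic form is at least `(α₂ - γ‖u‖²)‖v‖² = (α₂ - nγ)‖v‖²` by Cauchy–Schwarz, hence
positive definite. Strict convexity follows by restricting `U_d` to lines: along `t ↦ x + t v`
the second derivative is the Hessian quadratic form at `v`, so the restriction has strictly
increasing derivative.
-/

open Real Set InnerProductSpace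

section

variable {E : Type*} [NormedAddCommGroup E] [InnerProductSpace ℝ E]

theorem strictConvexOn_univ_of_hasFDerivAt_gradient [CompleteSpace E] {f : E → ℝ} {f' : E → E}
    {f'' : E → E →L[ℝ] E} (hf : ∀ x, HasGradientAt f (f' x) x)
    (hf' : ∀ x, HasFDerivAt f' (f'' x) x) (hpos : ∀ x v, v ≠ 0 → 0 < ⟪f'' x v, v⟫_ℝ) :
    StrictConvexOn ℝ univ f := by
  refine ⟨convex_univ, fun x _ y _ hxy a b ha hb hab => ?_⟩
  set v := y - x
  let line : ℝ → E := fun t => x + t • v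
  have hline : ∀ t, HasDerivAt line v t := fun t =>
    (((hasDerivAt_id t).smul_const v).const_add x).congr_deriv (one_smul ℝ v)
  have hg : ∀ t, HasDerivAt (f ∘ line) ⟪f' (line t), v⟫_ℝ t := fun t => by
    simpa using (hf (line t)).hasFDerivAt.comp_hasDerivAt t (hline t)
  have hg' : ∀ t, HasDerivAt (fun t => ⟪f' (line t), v⟫_ℝ) ⟪f'' (line t) v, v⟫_ℝ t := fun t => by
    simpa using ((hf' (line t)).comp_hasDerivAt t (hline t)).inner ℝ (hasDerivAt_const t v)
  have hconv : StrictConvexOn ℝ univ (f ∘ line) := by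
    refine StrictMono.strictConvexOn_univ_of_deriv
      (continuous_iff_continuousAt.2 fun t => (hg t).continuousAt) ?_
    rw [funext fun t => (hg t).deriv]
    refine strictMono_of_deriv_pos fun t => ?_
    rw [(hg' t).deriv]
    exact hpos _ _ (sub_ne_zero.2 hxy.symm)
  have hstrict := hconv.2 (mem_univ 0) (mem_univ 1) zero_ne_one ha hb hab
  have hline_ab : line (a • 0 + b • 1) = a • x + b • y := by
    simp only [line, v, smul_eq_mul, mul_zero, zero_add, mul_one]
    rw [eq_sub_of_add_eq hab]; module
  rw [Function.comp_apply, hline_ab] at hstrict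
  simpa [line, v] using hstrict

variable (γ α : ℝ) (u x₀ : E)

noncomputable section

def shapedPotential (x : E) : ℝ := -γ * cos ⟪u, x - x₀⟫_ℝ + α / 2 * ‖x - x₀‖ ^ 2

def shapedGradient (x : E) : E := (γ * sin ⟪u, x - x₀⟫_ℝ) • u + α • (x - x₀)

def shapedHessian (x : E) : E →L[ℝ] E :=
  (γ * cos ⟪u, x - x₀⟫_ℝ) • (innerSL ℝ u).smulRight u + α • ContinuousLinearMap.id ℝ E

end

theorem contDiff_shapedPotential {k : WithTop ℕ∞} : ContDiff ℝ k (shapedPotential γ α u x₀) :=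
  contDiff_const.mul (contDiff_const.inner ℝ (contDiff_id.sub contDiff_const)).cos |>.add
    (contDiff_const.mul ((contDiff_id.sub contDiff_const).norm_sq (𝕜 := ℝ)))

theorem hasFDerivAt_inner_sub_const (x : E) :
    HasFDerivAt (fun y => ⟪u, y - x₀⟫_ℝ) (innerSL ℝ u) x :=
  (innerSL ℝ u).hasFDerivAt.comp x ((hasFDerivAt_id x).sub_const x₀)

theorem hasGradientAt_shapedPotential [CompleteSpace E] (x : E) :
    HasGradientAt (shapedPotential γ α u x₀) (shapedGradient γ α u x₀ x) x := by
  have h := ((hasFDerivAt_inner_sub_const u x₀ x).cos.const_mul (-γ)).add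
    (((hasFDerivAt_id x).sub_const x₀).norm_sq.const_mul (α / 2))
  rw [hasGradientAt_iff_hasFDerivAt]
  refine HasFDerivAt.congr_fderiv (f := shapedPotential γ α u x₀) h ?_
  ext v
  simp only [add_apply, smul_apply, neg_apply, ContinuousLinearMap.comp_id, coe_innerSL_apply,
    smul_eq_mul, toDual_apply_apply, shapedGradient, inner_add_left, inner_smul_left,
    real_inner_comm, RCLike.conj_to_real, neg_smul, nsmul_eq_mul, Nat.cast_ofNat, id_eq]
  ring

theorem hasFDerivAt_shapedGradient (x : E) :
    HasFDerivAt (shapedGradient γ α u x₀) (shapedHessian γ α u x₀ x) x := by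
  have h := (((hasFDerivAt_inner_sub_const u x₀ x).sin.const_mul γ).smul_const u).add
    (((hasFDerivAt_id x).sub_const x₀).const_smul α)
  refine HasFDerivAt.congr_fderiv (f := shapedGradient γ α u x₀) h ?_
  ext v
  simp [shapedHessian, smul_smul]

theorem shapedHessian_apply (x v : E) :
    shapedHessian γ α u x₀ x v = (γ * cos ⟪u, x - x₀⟫_ℝ * ⟪u, v⟫_ℝ) • u + α • v := by
  simp [shapedHessian, smul_smul]

variable {γ α u}

theorem inner_shapedHessian_self_pos (hγ : 0 ≤ γ) (hα : γ * ‖u‖ ^ 2 < α) (x : E) {v : E}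
    (hv : v ≠ 0) : 0 < ⟪shapedHessian γ α u x₀ x v, v⟫_ℝ := by
  have hquad : ⟪shapedHessian γ α u x₀ x v, v⟫_ℝ
      = γ * cos ⟪u, x - x₀⟫_ℝ * ⟪u, v⟫_ℝ ^ 2 + α * ‖v‖ ^ 2 := by
    simp only [shapedHessian_apply, inner_add_left, inner_smul_left, real_inner_self_eq_norm_sq,
      RCLike.conj_to_real]
    ring
  have hcs : ⟪u, v⟫_ℝ ^ 2 ≤ ‖u‖ ^ 2 * ‖v‖ ^ 2 := by
    rw [← mul_pow, ← sq_abs]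
    exact pow_le_pow_left₀ (abs_nonneg _) (abs_real_inner_le_norm u v) 2
  have hv : 0 < ‖v‖ ^ 2 := by positivity
  rw [hquad]
  nlinarith [neg_one_le_cos ⟪u, x - x₀⟫_ℝ, mul_nonneg hγ (sq_nonneg ⟪u, v⟫_ℝ)]

theorem strictConvexOn_shapedPotential [CompleteSpace E] (hγ : 0 ≤ γ) (hα : γ * ‖u‖ ^ 2 < α) :
    StrictConvexOn ℝ univ (shapedPotential γ α u x₀) :=
  strictConvexOn_univ_of_hasFDerivAt_gradient (hasGradientAt_shapedPotential γ α u x₀)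
    (hasFDerivAt_shapedGradient γ α u x₀) fun x _ hv => inner_shapedHessian_self_pos x₀ hγ hα x hv

end

section Euclidean

variable {ι : Type*} [Fintype ι]

theorem EuclideanSpace.inner_toLp_one_left (x : EuclideanSpace ℝ ι) :
    ⟪(WithLp.toLp 2 1 : EuclideanSpace ℝ ι), x⟫_ℝ = ∑ i, x i := by
  simp [EuclideanSpace.inner_eq_star_dotProduct, dotProduct]

theorem EuclideanSpace.norm_toLp_one_sq :
    ‖(WithLp.toLp 2 1 : EuclideanSpace ℝ ι)‖ ^ 2 = Fintype.card ι := by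
  rw [← real_inner_self_eq_norm_sq, EuclideanSpace.inner_toLp_one_left]
  simp

variable [DecidableEq ι]

theorem toEuclideanCLM_eq_shapedHessian (γ α : ℝ) (x₀ x : EuclideanSpace ℝ ι) :
    Matrix.toEuclideanCLM (𝕜 := ℝ)
        ((γ * cos ⟪WithLp.toLp 2 1, x - x₀⟫_ℝ) • Matrix.of (fun _ _ => (1 : ℝ)) + α • 1)
      = shapedHessian γ α (WithLp.toLp 2 1) x₀ x := by
  refine ContinuousLinearMap.ext fun v => ?_
  ext i
  simp [shapedHessian_apply, EuclideanSpace.inner_toLp_one_left, Matrix.mulVec, dotProduct,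
    Finset.mul_sum]

theorem Matrix.posDef_of_inner_toEuclideanCLM_pos {A : Matrix ι ι ℝ} (hA : A.IsHermitian)
    (hpos : ∀ v, v ≠ 0 → 0 < ⟪Matrix.toEuclideanCLM (𝕜 := ℝ) A v, v⟫_ℝ) : A.PosDef := by
  refine .of_dotProduct_mulVec_pos hA fun x hx => ?_
  have := hpos (WithLp.toLp 2 x) (by simpa using hx)
  rwa [real_inner_comm, Matrix.inner_toEuclideanCLM] at this

theorem posDef_smul_allOnes_add_smul_one {γ α : ℝ} (hγ : 0 ≤ γ) (hα : γ * Fintype.card ι < α)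
    (x₀ x : EuclideanSpace ℝ ι) :
    ((γ * cos ⟪WithLp.toLp 2 1, x - x₀⟫_ℝ) • Matrix.of (fun _ _ => (1 : ℝ)) +
      α • (1 : Matrix ι ι ℝ)).PosDef := by
  refine Matrix.posDef_of_inner_toEuclideanCLM_pos ?_ fun v hv => ?_
  · ext i j
    simp [Matrix.one_apply, eq_comm]
  · rw [toEuclideanCLM_eq_shapedHessian]
    exact inner_shapedHessian_self_pos x₀ hγ (by rwa [EuclideanSpace.norm_toLp_one_sq]) x hv

end Euclidean

theorem stmt_8_general (n : ℕ) (qs : EuclideanSpace ℝ (Fin n))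
    (γ α₂ : ℝ) (hγ : 0 ≤ γ) (hα : (n : ℝ) * γ < α₂)
    (Ud : EuclideanSpace ℝ (Fin n) → ℝ)
    (hUd : ∀ q : EuclideanSpace ℝ (Fin n),
      Ud q = -γ * Real.cos ((∑ i, q i) - (∑ i, qs i)) + (α₂ / 2) * ‖q - qs‖ ^ 2) :
    ContDiff ℝ 2 Ud ∧
      (∀ q v : EuclideanSpace ℝ (Fin n),
        fderiv ℝ (gradient Ud) q v =
          (WithLp.toLp 2 (fun i => γ * Real.cos ((∑ j, q j) - (∑ j, qs j)) * (∑ j, v j) + α₂ * v i) :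
            EuclideanSpace ℝ (Fin n))) ∧
      (∀ q : EuclideanSpace ℝ (Fin n),
        ((γ * Real.cos ((∑ j, q j) - (∑ j, qs j))) • Matrix.of (fun _ _ => (1 : ℝ)) +
            α₂ • (1 : Matrix (Fin n) (Fin n) ℝ)).PosDef) ∧
      StrictConvexOn ℝ Set.univ Ud := by
  set u : EuclideanSpace ℝ (Fin n) := WithLp.toLp 2 1
  have hθ (q : EuclideanSpace ℝ (Fin n)) : ⟪u, q - qs⟫_ℝ = (∑ i, q i) - ∑ i, qs i := by
    rw [inner_sub_right, EuclideanSpace.inner_toLp_one_left, EuclideanSpace.inner_toLp_one_left]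
  have hUd' : Ud = shapedPotential γ α₂ u qs := funext fun q => by rw [hUd, shapedPotential, hθ]
  have hα' : γ * Fintype.card (Fin n) < α₂ := by rwa [Fintype.card_fin, mul_comm]
  have hgrad : gradient Ud = shapedGradient γ α₂ u qs :=
    funext fun q => (hUd' ▸ hasGradientAt_shapedPotential γ α₂ u qs q).gradient
  refine ⟨hUd' ▸ contDiff_shapedPotential γ α₂ u qs, fun q v => ?_,
    fun q => hθ q ▸ posDef_smul_allOnes_add_smul_one hγ hα' qs q,
    hUd' ▸ strictConvexOn_shapedPotential qs hγ (by rwa [EuclideanSpace.norm_toLp_one_sq])⟩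
  rw [hgrad, (hasFDerivAt_shapedGradient γ α₂ u qs q).fderiv, shapedHessian_apply, hθ]
  ext i
  simp [u, EuclideanSpace.inner_toLp_one_left]

/-- For `γ ≥ 0` and `α₂ > nγ`, the shaped potential
`U_d(q) = −γ cos(qΣ − qΣ⋆) + (α₂/2)‖q − q⋆‖²` is twice differentiable, its Hessian at
every `q` equals `γ cos(qΣ − qΣ⋆)·𝟙_{n×n} + α₂·Iₙ`, this matrix is positive definite
for every `q`, and consequently `U_d` is strictly convex on ℝⁿ. -/
theorem stmt_8 (n : ℕ) (hn : 1 ≤ n) (qs : EuclideanSpace ℝ (Fin n))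
    (γ α₂ : ℝ) (hγ : 0 ≤ γ) (hα : (n : ℝ) * γ < α₂)
    (Ud : EuclideanSpace ℝ (Fin n) → ℝ)
    (hUd : ∀ q : EuclideanSpace ℝ (Fin n),
      Ud q = -γ * Real.cos ((∑ i, q i) - (∑ i, qs i)) + (α₂ / 2) * ‖q - qs‖ ^ 2) :
    ContDiff ℝ 2 Ud ∧
      (∀ q v : EuclideanSpace ℝ (Fin n),
        fderiv ℝ (gradient Ud) q v =
          (WithLp.toLp 2 (fun i => γ * Real.cos ((∑ j, q j) - (∑ j, qs j)) * (∑ j, v j) + α₂ * v i) :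
            EuclideanSpace ℝ (Fin n))) ∧
      (∀ q : EuclideanSpace ℝ (Fin n),
        ((γ * Real.cos ((∑ j, q j) - (∑ j, qs j))) • Matrix.of (fun _ _ => (1 : ℝ)) +
            α₂ • (1 : Matrix (Fin n) (Fin n) ℝ)).PosDef) ∧
      StrictConvexOn ℝ Set.univ Ud :=
  stmt_8_general n qs γ α₂ hγ hα Ud hUd
end

section
/- Let n ≥ 1, α₁, α₂, γ, θ ∈ ℝ and set q⋆ := θ·𝟙ₙ ∈ ℝⁿ. Define U(q) = α₁(1 − cos(qΣ)) + (α₂/2)‖q‖² and U_d(q) = −γ cos(qΣ − nθ) + (α₂/2)‖q − q⋆‖², where qΣ := Σᵢ qᵢ. Then for every q ∈ ℝⁿ, ∇U(q) − ∇U_d(q) = (α₁ sin(qΣ) − γ sin(qΣ − nθ) + α₂ θ)·𝟙ₙ; in particular ∇U(q) − ∇U_d(q) lies in the span of 𝟙ₙ for every q, i.e., all its components are equal. -/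
/-!
Both potentials have the form `φ(qΣ) + (α₂/2)‖q − c‖²`. Since `qΣ = ⟪𝟙, q⟫`, the gradient of
`φ(qΣ)` is `φ'(qΣ)·𝟙`, and the two quadratic parts have gradients `α₂ q` and `α₂ (q − θ𝟙)`,
whose difference is again a multiple of `𝟙`.
-/

open InnerProductSpace

section

variable {E : Type*} [NormedAddCommGroup E] [InnerProductSpace ℝ E] [CompleteSpace E]
  {f g : E → ℝ} {f' g' x : E}

theorem HasGradientAt.add (hf : HasGradientAt f f' x) (hg : HasGradientAt g g' x) :
    HasGradientAt (fun y => f y + g y) (f' + g') x := by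
  rw [hasGradientAt_iff_hasFDerivAt] at *
  rw [map_add]
  exact hf.add hg

theorem HasGradientAt.const_mul (hf : HasGradientAt f f' x) (a : ℝ) :
    HasGradientAt (fun y => a * f y) (a • f') x := by
  rw [hasGradientAt_iff_hasFDerivAt] at *
  rw [map_smul]
  exact hf.const_mul a

theorem hasGradientAt_norm_sub_sq (c x : E) :
    HasGradientAt (fun y => ‖y - c‖ ^ 2) ((2 : ℝ) • (x - c)) x := by
  rw [hasGradientAt_iff_hasFDerivAt]
  refine ((hasFDerivAt_id x).sub_const c).norm_sq.congr_fderiv ?_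
  ext y
  simp

end

section

variable {ι : Type*} [Fintype ι] {φ : ℝ → ℝ} {φ' : ℝ} {x : EuclideanSpace ℝ ι}

theorem hasGradientAt_comp_sum (hφ : HasDerivAt φ φ' (∑ i, x i)) :
    HasGradientAt (fun y : EuclideanSpace ℝ ι => φ (∑ i, y i))
      (φ' • WithLp.toLp 2 (fun _ => 1)) x := by
  rw [hasGradientAt_iff_hasFDerivAt]
  have hsum : HasFDerivAt (fun y : EuclideanSpace ℝ ι => ∑ i, y i)
      (toDual ℝ _ (WithLp.toLp 2 (fun _ => 1))) x := by
    convert (toDual ℝ (EuclideanSpace ℝ ι) (WithLp.toLp 2 (fun _ => 1))).hasFDerivAt with y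
    simp [PiLp.inner_apply]
  rw [map_smul]
  exact hφ.comp_hasFDerivAt x hsum

theorem hasGradientAt_comp_sum_add_norm_sub_sq (hφ : HasDerivAt φ φ' (∑ i, x i))
    (a : ℝ) (c : EuclideanSpace ℝ ι) :
    HasGradientAt (fun y : EuclideanSpace ℝ ι => φ (∑ i, y i) + a / 2 * ‖y - c‖ ^ 2)
      (φ' • WithLp.toLp 2 (fun _ => 1) + a • (x - c)) x := by
  convert (hasGradientAt_comp_sum hφ).add ((hasGradientAt_norm_sub_sq c x).const_mul (a / 2))
    using 2
  rw [smul_smul]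
  norm_num

end

theorem stmt_10_general (n : ℕ) (α₁ α₂ γ θ : ℝ)
    (qs : EuclideanSpace ℝ (Fin n)) (hqs : qs = WithLp.toLp 2 (fun _ => θ))
    (U Ud : EuclideanSpace ℝ (Fin n) → ℝ)
    (hU : ∀ q : EuclideanSpace ℝ (Fin n),
      U q = α₁ * (1 - Real.cos (∑ i, q i)) + (α₂ / 2) * ‖q‖ ^ 2)
    (hUd : ∀ q : EuclideanSpace ℝ (Fin n),
      Ud q = -γ * Real.cos ((∑ i, q i) - (n : ℝ) * θ) + (α₂ / 2) * ‖q - qs‖ ^ 2) :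
    (∀ q : EuclideanSpace ℝ (Fin n),
      gradient U q - gradient Ud q =
        (α₁ * Real.sin (∑ i, q i) - γ * Real.sin ((∑ i, q i) - (n : ℝ) * θ) + α₂ * θ) •
          (WithLp.toLp 2 (fun _ => (1 : ℝ)) : EuclideanSpace ℝ (Fin n))) ∧
    ∀ (q : EuclideanSpace ℝ (Fin n)) (i j : Fin n),
      (gradient U q - gradient Ud q) i = (gradient U q - gradient Ud q) j := by
  have hU_eq : U = fun q => α₁ * (1 - Real.cos (∑ i, q i)) + α₂ / 2 * ‖q - 0‖ ^ 2 := by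
    funext q
    rw [hU, sub_zero]
  have hUd_eq : Ud = fun q => -γ * Real.cos ((∑ i, q i) - n * θ) + α₂ / 2 * ‖q - qs‖ ^ 2 :=
    funext hUd
  have matching : ∀ q : EuclideanSpace ℝ (Fin n), gradient U q - gradient Ud q =
      (α₁ * Real.sin (∑ i, q i) - γ * Real.sin ((∑ i, q i) - n * θ) + α₂ * θ) •
        (WithLp.toLp 2 (fun _ => (1 : ℝ)) : EuclideanSpace ℝ (Fin n)) := by
    intro q
    have hgradU := hasGradientAt_comp_sum_add_norm_sub_sq
      (((Real.hasDerivAt_cos _).const_sub 1).const_mul α₁) α₂ 0 (x := q)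
    have hgradUd := hasGradientAt_comp_sum_add_norm_sub_sq
      ((Real.hasDerivAt_cos _).comp_sub_const _ (n * θ) |>.const_mul (-γ)) α₂ qs (x := q)
    rw [hU_eq, hUd_eq, hgradU.gradient, hgradUd.gradient, hqs]
    ext i
    simp only [neg_neg, sub_zero, mul_neg, neg_mul, PiLp.sub_apply, PiLp.add_apply,
      PiLp.smul_apply, smul_eq_mul, mul_one]
    ring
  exact ⟨matching, fun q i j => by simp [matching q]⟩

/-- Matching equation of potential energy shaping: for the homogeneous
target `q⋆ = θ·𝟙ₙ`, the difference `∇U(q) − ∇U_d(q)` equals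
`(α₁ sin(qΣ) − γ sin(qΣ − nθ) + α₂θ)·𝟙ₙ`; in particular it lies in the span of `𝟙ₙ`,
i.e. all its components are equal. -/
theorem stmt_10 (n : ℕ) (hn : 1 ≤ n) (α₁ α₂ γ θ : ℝ)
    (qs : EuclideanSpace ℝ (Fin n)) (hqs : qs = WithLp.toLp 2 (fun _ => θ))
    (U Ud : EuclideanSpace ℝ (Fin n) → ℝ)
    (hU : ∀ q : EuclideanSpace ℝ (Fin n),
      U q = α₁ * (1 - Real.cos (∑ i, q i)) + (α₂ / 2) * ‖q‖ ^ 2)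
    (hUd : ∀ q : EuclideanSpace ℝ (Fin n),
      Ud q = -γ * Real.cos ((∑ i, q i) - (n : ℝ) * θ) + (α₂ / 2) * ‖q - qs‖ ^ 2) :
    (∀ q : EuclideanSpace ℝ (Fin n),
      gradient U q - gradient Ud q =
        (α₁ * Real.sin (∑ i, q i) - γ * Real.sin ((∑ i, q i) - (n : ℝ) * θ) + α₂ * θ) •
          (WithLp.toLp 2 (fun _ => (1 : ℝ)) : EuclideanSpace ℝ (Fin n))) ∧
    ∀ (q : EuclideanSpace ℝ (Fin n)) (i j : Fin n),
      (gradient U q - gradient Ud q) i = (gradient U q - gradient Ud q) j :=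
  stmt_10_general n α₁ α₂ γ θ qs hqs U Ud hU hUd
end

section
/- Let n ≥ 1, q⋆ ∈ ℝⁿ, γ ≥ 0 and α₂ > n γ, and define φ : ℝⁿ → ℝⁿ by φ(q) = γ sin(qΣ − qΣ⋆)·𝟙ₙ + α₂(q − q⋆), where qΣ := Σᵢ qᵢ and qΣ⋆ := Σᵢ q⋆ᵢ. Then φ is injective on ℝⁿ. -/
/-!
Since `qΣ = ⟪𝟙, q⟫`, the map is `φ q = α₂ • (q - q⋆) + G q` with `G q = f ⟪𝟙, q⟫ • 𝟙` and
`f s = γ sin (s - qΣ⋆)` a `γ`-Lipschitz function. By Cauchy–Schwarz `G` is Lipschitz with constant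
`γ ‖𝟙‖² = n γ < α₂`, so `α₂ • id` cannot be cancelled by a difference of values of `G`:
`α₂ ‖a - b‖ = ‖G a - G b‖ ≤ n γ ‖a - b‖` forces `a = b`.
-/

open Function RealInnerProductSpace

section

variable {E : Type*} [NormedAddCommGroup E] [NormedSpace ℝ E]

theorem injective_smul_add_of_norm_sub_le {g : E → E} {K α : ℝ}
    (hg : ∀ x y, ‖g x - g y‖ ≤ K * ‖x - y‖) (hKα : K < α) :
    Injective fun x => α • x + g x := by
  intro x y hxy
  have hsmul : α • (x - y) = g y - g x := by
    linear_combination (norm := module) hxy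
  have : α * ‖x - y‖ ≤ K * ‖x - y‖ :=
    calc α * ‖x - y‖ ≤ ‖α • (x - y)‖ := by
          rw [norm_smul, Real.norm_eq_abs]; gcongr; exact le_abs_self α
      _ = ‖g y - g x‖ := by rw [hsmul]
      _ ≤ K * ‖x - y‖ := by rw [← norm_neg, neg_sub]; exact hg x y
  have : ‖x - y‖ ≤ 0 := by nlinarith [norm_nonneg (x - y)]
  exact sub_eq_zero.mp (norm_le_zero_iff.mp this)

end

section

variable {F : Type*} [NormedAddCommGroup F] [InnerProductSpace ℝ F]

theorem norm_smul_inner_sub_smul_inner_le {f : ℝ → ℝ} {L : ℝ} (hL : 0 ≤ L)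
    (hf : ∀ s t, |f s - f t| ≤ L * |s - t|) (u x y : F) :
    ‖f ⟪u, x⟫ • u - f ⟪u, y⟫ • u‖ ≤ L * ‖u‖ ^ 2 * ‖x - y‖ :=
  calc ‖f ⟪u, x⟫ • u - f ⟪u, y⟫ • u‖ = |f ⟪u, x⟫ - f ⟪u, y⟫| * ‖u‖ := by
        rw [← sub_smul, norm_smul, Real.norm_eq_abs]
    _ ≤ L * |⟪u, x - y⟫| * ‖u‖ := by
        rw [inner_sub_right]; gcongr; exact hf _ _
    _ ≤ L * (‖u‖ * ‖x - y‖) * ‖u‖ := by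
        gcongr; exact abs_real_inner_le_norm u (x - y)
    _ = L * ‖u‖ ^ 2 * ‖x - y‖ := by ring

end

namespace EuclideanSpace

variable {ι : Type*} [Fintype ι]

theorem inner_toLp_one (x : EuclideanSpace ℝ ι) :
    ⟪WithLp.toLp 2 (fun _ => 1), x⟫ = ∑ i, x i := by
  simp [PiLp.inner_apply]

theorem norm_toLp_one_sq_s11 :
    ‖(WithLp.toLp 2 (fun _ => 1) : EuclideanSpace ℝ ι)‖ ^ 2 = Fintype.card ι := by
  rw [← real_inner_self_eq_norm_sq, inner_toLp_one]
  simp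

end EuclideanSpace

theorem stmt_11_general (n : ℕ) (qs : EuclideanSpace ℝ (Fin n))
    (γ α₂ : ℝ) (hγ : 0 ≤ γ) (hα : (n : ℝ) * γ < α₂)
    (one : EuclideanSpace ℝ (Fin n)) (hone : one = WithLp.toLp 2 (fun _ => 1))
    (φ : EuclideanSpace ℝ (Fin n) → EuclideanSpace ℝ (Fin n))
    (hφ : ∀ q : EuclideanSpace ℝ (Fin n),
      φ q = (γ * Real.sin ((∑ i, q i) - (∑ i, qs i))) • one + α₂ • (q - qs)) :
    Function.Injective φ := by
  set f : ℝ → ℝ := fun s => γ * Real.sin (s - ∑ i, qs i)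
  have hf : ∀ s t, |f s - f t| ≤ γ * |s - t| := fun s t => by
    rw [← mul_sub, abs_mul, abs_of_nonneg hγ]
    refine mul_le_mul_of_nonneg_left ((Real.abs_sin_sub_sin_le _ _).trans_eq ?_) hγ
    rw [sub_sub_sub_cancel_right]
  have hG (x y : EuclideanSpace ℝ (Fin n)) :
      ‖f ⟪one, x⟫ • one - f ⟪one, y⟫ • one‖ ≤ n * γ * ‖x - y‖ := by
    simpa [hone, EuclideanSpace.norm_toLp_one_sq_s11, mul_comm (n : ℝ)] using
      norm_smul_inner_sub_smul_inner_le hγ hf one x y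
  have hφ_eq : φ = (· - α₂ • qs) ∘ fun q => α₂ • q + f ⟪one, q⟫ • one := by
    ext1 q
    simp only [hφ, comp_apply, hone, EuclideanSpace.inner_toLp_one, f]
    module
  rw [hφ_eq]
  exact sub_left_injective.comp (injective_smul_add_of_norm_sub_le hG hα)

/-- For `γ ≥ 0` and `α₂ > nγ`, the map
`φ(q) = γ sin(qΣ − qΣ⋆)·𝟙ₙ + α₂(q − q⋆)` is injective on ℝⁿ. -/
theorem stmt_11 (n : ℕ) (hn : 1 ≤ n) (qs : EuclideanSpace ℝ (Fin n))
    (γ α₂ : ℝ) (hγ : 0 ≤ γ) (hα : (n : ℝ) * γ < α₂)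
    (one : EuclideanSpace ℝ (Fin n)) (hone : one = WithLp.toLp 2 (fun _ => 1))
    (φ : EuclideanSpace ℝ (Fin n) → EuclideanSpace ℝ (Fin n))
    (hφ : ∀ q : EuclideanSpace ℝ (Fin n),
      φ q = (γ * Real.sin ((∑ i, q i) - (∑ i, qs i))) • one + α₂ • (q - qs)) :
    Function.Injective φ :=
  stmt_11_general n qs γ α₂ hγ hα one hone φ hφ
end

section
/- Let n ≥ 1, q⋆ ∈ ℝⁿ, γ ≥ 0 and α₂ > n γ, and define φ : ℝⁿ → ℝⁿ by φ(q) = γ sin(qΣ − qΣ⋆)·𝟙ₙ + α₂(q − q⋆), where qΣ := Σᵢ qᵢ and qΣ⋆ := Σᵢ q⋆ᵢ. Then for every τ ∈ ℝⁿ there exists a unique q̄ ∈ ℝⁿ with φ(q̄) = τ; that is, φ is a bijection of ℝⁿ. -/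
/-!
Summing the coordinates of `φ q = τ` shows that `s = qΣ - qΣ⋆` solves the scalar equation
`n γ sin s + α₂ s = Σ τᵢ`. Since `u ↦ n γ sin u` is `nγ`-Lipschitz and `nγ < α₂`, the left side
increases with slope at least `α₂ - nγ > 0`, so this equation has exactly one solution `s`.
Once `s` is known, `q = q⋆ + α₂⁻¹ (τ - γ sin s • 𝟙)` is forced, and it is a solution.
-/

open Filter

theorem bijective_add_const_mul_of_lipschitzWith {f : ℝ → ℝ} {K : NNReal} {α : ℝ}
    (hf : LipschitzWith K f) (hK : (K : ℝ) < α) :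
    Function.Bijective (fun u => f u + α * u) := by
  have hpos : 0 < α - K := sub_pos.2 hK
  have hgrowth : ∀ u v, u ≤ v → (α - K) * (v - u) ≤ (f v + α * v) - (f u + α * u) := by
    intro u v huv
    have h := hf.dist_le_mul v u
    rw [Real.dist_eq, Real.dist_eq, abs_of_nonneg (sub_nonneg.2 huv)] at h
    linarith [neg_abs_le (f v - f u)]
  refine ⟨StrictMono.injective fun u v huv => ?_, ?_⟩
  · nlinarith [hgrowth u v huv.le]
  have hcont : Continuous fun u => f u + α * u := hf.continuous.add (continuous_const_mul α)
  refine hcont.surjective ?_ ?_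
  · refine tendsto_atTop_mono' _ ?_
      (tendsto_atTop_add_const_right _ (f 0) (tendsto_id.const_mul_atTop hpos))
    filter_upwards [eventually_ge_atTop 0] with u hu
    dsimp only [id]
    linarith [hgrowth 0 u hu]
  · refine tendsto_atBot_mono' _ ?_
      (tendsto_atBot_add_const_right _ (f 0) (tendsto_id.const_mul_atBot hpos))
    filter_upwards [eventually_le_atBot 0] with u hu
    dsimp only [id]
    linarith [hgrowth u 0 hu]

theorem bijective_mul_sin_add_mul {c α : ℝ} (h : |c| < α) :
    Function.Bijective fun u => c * Real.sin u + α * u := by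
  have hf : LipschitzWith (‖c‖₊ * 1) fun u => c * Real.sin u :=
    (lipschitzWith_smul c).comp Real.lipschitzWith_sin
  exact bijective_add_const_mul_of_lipschitzWith hf (by simpa using h)

theorem bijective_smul_add_smul_of_bijective {𝕜 E : Type*} [Field 𝕜] [AddCommGroup E]
    [Module 𝕜 E] (ℓ : E →ₗ[𝕜] 𝕜) (e : E) (h : 𝕜 → 𝕜) {α : 𝕜} (hα : α ≠ 0)
    (hscalar : Function.Bijective fun u => ℓ e * h u + α * u) :
    Function.Bijective fun x => h (ℓ x) • e + α • x := by
  have hℓ : ∀ x, ℓ (h (ℓ x) • e + α • x) = ℓ e * h (ℓ x) + α * ℓ x := fun x => by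
    simp [mul_comm]
  refine ⟨fun x y hxy => ?_, fun τ => ?_⟩
  · have hℓxy : ℓ x = ℓ y := hscalar.1 <| by simpa only [hℓ] using congrArg ℓ hxy
    simp only [hℓxy, add_right_inj] at hxy
    exact smul_right_injective E hα hxy
  · obtain ⟨u, hu⟩ := hscalar.2 (ℓ τ)
    have hℓx : ℓ (α⁻¹ • (τ - h u • e)) = u := by
      simp only at hu
      rw [map_smul, map_sub, map_smul, ← hu, smul_eq_mul, smul_eq_mul]
      field_simp
      ring
    refine ⟨α⁻¹ • (τ - h u • e), ?_⟩
    simp only [hℓx, smul_inv_smul₀ hα, add_sub_cancel]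

theorem stmt_12_general (n : ℕ) (qs : EuclideanSpace ℝ (Fin n))
    (γ α₂ : ℝ) (hγ : 0 ≤ γ) (hα : (n : ℝ) * γ < α₂)
    (one : EuclideanSpace ℝ (Fin n)) (hone : one = WithLp.toLp 2 (fun _ => 1))
    (φ : EuclideanSpace ℝ (Fin n) → EuclideanSpace ℝ (Fin n))
    (hφ : ∀ q : EuclideanSpace ℝ (Fin n),
      φ q = (γ * Real.sin ((∑ i, q i) - (∑ i, qs i))) • one + α₂ • (q - qs)) :
    ∀ τ : EuclideanSpace ℝ (Fin n), ∃! qbar : EuclideanSpace ℝ (Fin n), φ qbar = τ := by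
  have hnγ : 0 ≤ (n : ℝ) * γ := mul_nonneg n.cast_nonneg hγ
  let ℓ : EuclideanSpace ℝ (Fin n) →ₗ[ℝ] ℝ := ∑ i, (EuclideanSpace.proj i).toLinearMap
  have hℓ : ∀ x, ℓ x = ∑ i, x i := fun x => by simp [ℓ]
  have hℓone : ℓ one = n := by simp [hℓ, hone]
  have hαpos : 0 < α₂ := hnγ.trans_lt hα
  have hscalar : Function.Bijective fun u => ℓ one * (γ * Real.sin u) + α₂ * u := by
    have hc : |(n : ℝ) * γ| < α₂ := by rwa [abs_of_nonneg hnγ]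
    simpa only [hℓone, mul_assoc] using bijective_mul_sin_add_mul hc
  have hφ' : φ = (fun x => (γ * Real.sin (ℓ x)) • one + α₂ • x) ∘ (Equiv.subRight qs) := by
    ext1 q
    simp [hφ, hℓ]
  rw [hφ']
  exact ((bijective_smul_add_smul_of_bijective ℓ one _ hαpos.ne' hscalar).comp
    (Equiv.subRight qs).bijective).existsUnique

/-- For `γ ≥ 0` and `α₂ > nγ`, the map
`φ(q) = γ sin(qΣ − qΣ⋆)·𝟙ₙ + α₂(q − q⋆)` is a bijection of ℝⁿ: for every `τ ∈ ℝⁿ`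
there is a unique `q̄` with `φ(q̄) = τ`. -/
theorem stmt_12 (n : ℕ) (hn : 1 ≤ n) (qs : EuclideanSpace ℝ (Fin n))
    (γ α₂ : ℝ) (hγ : 0 ≤ γ) (hα : (n : ℝ) * γ < α₂)
    (one : EuclideanSpace ℝ (Fin n)) (hone : one = WithLp.toLp 2 (fun _ => 1))
    (φ : EuclideanSpace ℝ (Fin n) → EuclideanSpace ℝ (Fin n))
    (hφ : ∀ q : EuclideanSpace ℝ (Fin n),
      φ q = (γ * Real.sin ((∑ i, q i) - (∑ i, qs i))) • one + α₂ • (q - qs)) :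
    ∀ τ : EuclideanSpace ℝ (Fin n), ∃! qbar : EuclideanSpace ℝ (Fin n), φ qbar = τ :=
  stmt_12_general n qs γ α₂ hγ hα one hone φ hφ
end

section
/- Let n ≥ 1, ℓ > 0, θ, γ, α₂ ∈ ℝ, and define F_x, F_y : ℝ → ℝ by F_x(f) = ℓ sin(nθ + (γ + α₂)ℓ f) + ℓ·Σ_{k=1}^{n−1} sin(kθ + γℓ f) and F_y(f) = ℓ cos(nθ + (γ + α₂)ℓ f) + ℓ·Σ_{k=1}^{n−1} cos(kθ + γℓ f). Then the limit as f → 0 (f ≠ 0) of √((F_x(f) − F_x(0))² + (F_y(f) − F_y(0))²)/|f| exists and equals ℓ²·√((γ·Σ_{k=1}^{n} cos(kθ) + α₂ cos(nθ))² + (γ·Σ_{k=1}^{n} sin(kθ) + α₂ sin(nθ))²). -/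
/-!
The displacement ratio is the Euclidean length of the difference quotient of the curve
`f ↦ (F_x f, F_y f)`, so it tends to the length of its velocity at `0`. Differentiating the
links term by term gives the velocity `ℓ² (X, -Y)` with `X, Y` the two expressions under the
root, once the term `k = n` is split off the sums over `1 ≤ k ≤ n`.
-/

open Filter Topology Real

theorem tendsto_sqrt_sq_add_sq_div_abs {u v : ℝ → ℝ} {a b x : ℝ}
    (hu : HasDerivAt u a x) (hv : HasDerivAt v b x) :
    Tendsto (fun t => √((u t - u x) ^ 2 + (v t - v x) ^ 2) / |t - x|) (𝓝[≠] x)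
      (𝓝 √(a ^ 2 + b ^ 2)) := by
  have hslope : Tendsto (fun t => √(slope u x t ^ 2 + slope v x t ^ 2)) (𝓝[≠] x)
      (𝓝 √(a ^ 2 + b ^ 2)) :=
    (((hasDerivAt_iff_tendsto_slope.mp hu).pow 2).add
      ((hasDerivAt_iff_tendsto_slope.mp hv).pow 2)).sqrt
  refine hslope.congr' ?_
  filter_upwards [self_mem_nhdsWithin] with t ht
  rw [slope_def_field, slope_def_field, div_pow, div_pow, ← add_div,
    sqrt_div (by positivity), sqrt_sq_eq_abs]

theorem sqrt_mul_sq_add_neg_mul_sq {c : ℝ} (hc : 0 ≤ c) (x y : ℝ) :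
    √((c * x) ^ 2 + (-(c * y)) ^ 2) = c * √(x ^ 2 + y ^ 2) := by
  rw [show (c * x) ^ 2 + (-(c * y)) ^ 2 = c ^ 2 * (x ^ 2 + y ^ 2) by ring,
    sqrt_mul (sq_nonneg c), sqrt_sq hc]

theorem hasDerivAt_sin_const_add_mul (c a x : ℝ) :
    HasDerivAt (fun t => sin (c + a * t)) (cos (c + a * x) * a) x := by
  simpa using (((hasDerivAt_id x).const_mul a).const_add c).sin

theorem hasDerivAt_cos_const_add_mul (c a x : ℝ) :
    HasDerivAt (fun t => cos (c + a * t)) (-sin (c + a * x) * a) x := by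
  simpa using (((hasDerivAt_id x).const_mul a).const_add c).cos

theorem Finset.sum_Icc_one_eq_sum_Icc_sub_one_add {M : Type*} [AddCommMonoid M] {n : ℕ}
    (hn : 1 ≤ n) (g : ℕ → M) :
    ∑ k ∈ Icc 1 n, g k = ∑ k ∈ Icc 1 (n - 1), g k + g n := by
  obtain ⟨m, rfl⟩ := Nat.exists_eq_add_of_le' hn
  rw [sum_Icc_succ_top (by omega), Nat.add_sub_cancel]

section EndEffector

variable (n : ℕ) (ℓ θ γ α₂ : ℝ)

theorem hasDerivAt_endEffector_x :
    HasDerivAt (fun f => ℓ * sin (n * θ + (γ + α₂) * ℓ * f) +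
        ℓ * ∑ k ∈ Finset.Icc 1 (n - 1), sin (k * θ + γ * ℓ * f))
      (ℓ ^ 2 * ((γ + α₂) * cos (n * θ) + γ * ∑ k ∈ Finset.Icc 1 (n - 1), cos (k * θ))) 0 := by
  have hlast := (hasDerivAt_sin_const_add_mul (n * θ) ((γ + α₂) * ℓ) 0).const_mul ℓ
  have hrest := (HasDerivAt.fun_sum (u := Finset.Icc 1 (n - 1)) fun k _ =>
    hasDerivAt_sin_const_add_mul (k * θ) (γ * ℓ) 0).const_mul ℓ
  refine (hlast.fun_add hrest).congr_deriv ?_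
  simp only [mul_zero, add_zero, ← Finset.sum_mul]
  ring

theorem hasDerivAt_endEffector_y :
    HasDerivAt (fun f => ℓ * cos (n * θ + (γ + α₂) * ℓ * f) +
        ℓ * ∑ k ∈ Finset.Icc 1 (n - 1), cos (k * θ + γ * ℓ * f))
      (-(ℓ ^ 2 * ((γ + α₂) * sin (n * θ) + γ * ∑ k ∈ Finset.Icc 1 (n - 1), sin (k * θ)))) 0 := by
  have hlast := (hasDerivAt_cos_const_add_mul (n * θ) ((γ + α₂) * ℓ) 0).const_mul ℓ
  have hrest := (HasDerivAt.fun_sum (u := Finset.Icc 1 (n - 1)) fun k _ =>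
    hasDerivAt_cos_const_add_mul (k * θ) (γ * ℓ) 0).const_mul ℓ
  refine (hlast.fun_add hrest).congr_deriv ?_
  simp only [mul_zero, add_zero, ← Finset.sum_mul, Finset.sum_neg_distrib]
  ring

end EndEffector

theorem stmt_16_general (n : ℕ) (hn : 1 ≤ n) (ℓ θ γ α₂ : ℝ)
    (Fx Fy : ℝ → ℝ)
    (hFx : ∀ f, Fx f = ℓ * Real.sin ((n : ℝ) * θ + (γ + α₂) * ℓ * f) +
      ℓ * ∑ k ∈ Finset.Icc 1 (n - 1), Real.sin ((k : ℝ) * θ + γ * ℓ * f))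
    (hFy : ∀ f, Fy f = ℓ * Real.cos ((n : ℝ) * θ + (γ + α₂) * ℓ * f) +
      ℓ * ∑ k ∈ Finset.Icc 1 (n - 1), Real.cos ((k : ℝ) * θ + γ * ℓ * f)) :
    Filter.Tendsto
      (fun f : ℝ => Real.sqrt ((Fx f - Fx 0) ^ 2 + (Fy f - Fy 0) ^ 2) / |f|)
      (nhdsWithin 0 {(0 : ℝ)}ᶜ)
      (nhds (ℓ ^ 2 * Real.sqrt
        ((γ * ∑ k ∈ Finset.Icc 1 n, Real.cos ((k : ℝ) * θ) + α₂ * Real.cos ((n : ℝ) * θ)) ^ 2 +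
         (γ * ∑ k ∈ Finset.Icc 1 n, Real.sin ((k : ℝ) * θ) + α₂ * Real.sin ((n : ℝ) * θ)) ^ 2))) := by
  have hdx := hasDerivAt_endEffector_x n ℓ θ γ α₂
  have hdy := hasDerivAt_endEffector_y n ℓ θ γ α₂
  rw [← funext hFx] at hdx
  rw [← funext hFy] at hdy
  have hlim := tendsto_sqrt_sq_add_sq_div_abs hdx hdy
  simp only [sub_zero, sqrt_mul_sq_add_neg_mul_sq (sq_nonneg ℓ)] at hlim
  rw [Finset.sum_Icc_one_eq_sum_Icc_sub_one_add hn, Finset.sum_Icc_one_eq_sum_Icc_sub_one_add hn]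
  convert hlim using 4
  ring

/-- Closed-form transverse stiffness limit at the end-effector: the
displacement-to-force ratio `√((Fx(f)−Fx(0))² + (Fy(f)−Fy(0))²)/|f|` tends, as
`f → 0`, `f ≠ 0`, to
`ℓ²√((γΣ_{k=1}^n cos kθ + α₂ cos nθ)² + (γΣ_{k=1}^n sin kθ + α₂ sin nθ)²)`. -/
theorem stmt_16 (n : ℕ) (hn : 1 ≤ n) (ℓ θ γ α₂ : ℝ) (hℓ : 0 < ℓ)
    (Fx Fy : ℝ → ℝ)
    (hFx : ∀ f, Fx f = ℓ * Real.sin ((n : ℝ) * θ + (γ + α₂) * ℓ * f) +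
      ℓ * ∑ k ∈ Finset.Icc 1 (n - 1), Real.sin ((k : ℝ) * θ + γ * ℓ * f))
    (hFy : ∀ f, Fy f = ℓ * Real.cos ((n : ℝ) * θ + (γ + α₂) * ℓ * f) +
      ℓ * ∑ k ∈ Finset.Icc 1 (n - 1), Real.cos ((k : ℝ) * θ + γ * ℓ * f)) :
    Filter.Tendsto
      (fun f : ℝ => Real.sqrt ((Fx f - Fx 0) ^ 2 + (Fy f - Fy 0) ^ 2) / |f|)
      (nhdsWithin 0 {(0 : ℝ)}ᶜ)
      (nhds (ℓ ^ 2 * Real.sqrt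
        ((γ * ∑ k ∈ Finset.Icc 1 n, Real.cos ((k : ℝ) * θ) + α₂ * Real.cos ((n : ℝ) * θ)) ^ 2 +
         (γ * ∑ k ∈ Finset.Icc 1 n, Real.sin ((k : ℝ) * θ) + α₂ * Real.sin ((n : ℝ) * θ)) ^ 2))) :=
  stmt_16_general n hn ℓ θ γ α₂ Fx Fy hFx hFy
end
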